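/- arXiv:cs/9907041 — 2 statements merged into one kernel-verified Lean document; each statement's English description precedes it below -/
import Mathlib

section
/- For any f, g : GF(2)^n → GF(2), the cardinality of the set {v ∈ GF(2)^n : ∀ u, f(u) = g(v + u)} is either 0 or a power of 2. -/
/-! If `v₀` is one solution, the solutions are exactly the `v` with `v - v₀` a period of `g`,
so a nonempty solution set is a coset of the period subgroup of `g`. In `(ZMod 2)ⁿ` that subgroup
has order dividing `2ⁿ`, hence a power of two. -/

section Periods

variable {G β : Type*} [AddGroup G]

def periods (g : G → β) : AddSubgroup G where
  carrier := {w | ∀ u, g (w + u) = g u}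
  zero_mem' u := by rw [zero_add]
  add_mem' {a b} ha hb u := by rw [add_assoc, ha, hb]
  neg_mem' {a} ha u := by rw [← ha (-a + u), add_neg_cancel_left]

theorem mem_periods {g : G → β} {w : G} : w ∈ periods g ↔ ∀ u, g (w + u) = g u :=
  Iff.rfl

theorem translate_iff_sub_mem_periods {f g : G → β} {v₀ : G} (h₀ : ∀ u, f u = g (v₀ + u))
    (v : G) : (∀ u, f u = g (v + u)) ↔ v - v₀ ∈ periods g := by
  simp only [mem_periods, h₀]
  constructor
  · intro hv u
    simpa [sub_eq_add_neg, add_assoc] using (hv (-v₀ + u)).symm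
  · intro hv u
    rw [← hv (v₀ + u), ← add_assoc, sub_add_cancel]

theorem card_translates_eq_zero_or_card_periods (f g : G → β) :
    Nat.card {v : G | ∀ u, f u = g (v + u)} = 0 ∨
      Nat.card {v : G | ∀ u, f u = g (v + u)} = Nat.card (periods g) := by
  rcases Set.eq_empty_or_nonempty {v : G | ∀ u, f u = g (v + u)} with hempty | ⟨v₀, h₀⟩
  · left
    simp [hempty]
  · right
    exact Nat.card_congr
      ((Equiv.subRight v₀).subtypeEquiv (translate_iff_sub_mem_periods h₀))

end Periods

theorem AddSubgroup.exists_card_eq_prime_pow {G : Type*} [AddGroup G] {p n : ℕ}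
    (hp : p.Prime) (hG : Nat.card G = p ^ n) (H : AddSubgroup G) : ∃ i, Nat.card H = p ^ i := by
  obtain ⟨i, -, hi⟩ := (Nat.dvd_prime_pow hp).mp (hG ▸ H.card_addSubgroup_dvd_card)
  exact ⟨i, hi⟩

theorem stmt_2 (n : ℕ) (f g : (Fin n → ZMod 2) → ZMod 2) :
    Nat.card {v : Fin n → ZMod 2 | ∀ u, f u = g (v + u)} = 0 ∨
      ∃ i : ℕ, Nat.card {v : Fin n → ZMod 2 | ∀ u, f u = g (v + u)} = 2 ^ i := by
  have hcard : Nat.card (Fin n → ZMod 2) = 2 ^ n := by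
    rw [Nat.card_fun, Nat.card_zmod, Nat.card_fin]
  obtain ⟨i, hi⟩ := (periods g).exists_card_eq_prime_pow Nat.prime_two hcard
  exact (card_translates_eq_zero_or_card_periods f g).imp_right fun h => ⟨i, h.trans hi⟩
end

section
/- Let f, m, w be natural numbers with f < 2^w and m < 2^w. Then 2^{w+1} − f + m is a power of 2 if and only if m = f. -/
/-! Since `f, m < 2 ^ w`, the number `2 ^ (w + 1) - f + m` lies strictly between `2 ^ w` and
`2 ^ (w + 2)`, and the only power of two in that range is `2 ^ (w + 1)`. -/

theorem Nat.eq_succ_of_pow_lt_of_lt_pow {b w i : ℕ} (hb : 1 < b)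
    (hlo : b ^ w < b ^ i) (hhi : b ^ i < b ^ (w + 2)) : i = w + 1 := by
  have hwi : w < i := (Nat.pow_lt_pow_iff_right hb).mp hlo
  have hiw : i < w + 2 := (Nat.pow_lt_pow_iff_right hb).mp hhi
  omega

theorem stmt_13 (f m w : ℕ) (hf : f < 2 ^ w) (hm : m < 2 ^ w) :
    (∃ i : ℕ, 2 ^ (w + 1) - f + m = 2 ^ i) ↔ m = f := by
  have hsucc : 2 ^ (w + 1) = 2 * 2 ^ w := pow_succ' 2 w
  have hsucc₂ : 2 ^ (w + 2) = 4 * 2 ^ w := by rw [pow_add]; ring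
  constructor
  · rintro ⟨i, hi⟩
    have hi' : i = w + 1 :=
      Nat.eq_succ_of_pow_lt_of_lt_pow one_lt_two (by omega) (by omega)
    subst hi'
    omega
  · rintro rfl
    exact ⟨w + 1, by omega⟩
end
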